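/- If E(β₁,β₂) ≠ 0, then there exists n' such that for all n ≥ n', the determinant n(F_n)·n(F_{n+1}) of the diagonal matrix diag(n(F_n), n(F_{n+1})) is strictly positive; i.e., n(F_n) and n(F_{n+1}) have the same sign. -/

import Mathlib

noncomputable def goldenα : ℝ := (1 + Real.sqrt 5) / 2

noncomputable def Efun (β₁ β₂ : ℝ) : ℝ :=
  (1 / 5) * (1 + β₁ + 2 * β₂ + 5 * β₁ * β₂ + goldenα * (β₁ + 3 * β₂ + 8 * β₁ * β₂))

noncomputable def nrm (β₁ β₂ : ℝ) (n : ℕ) : ℝ :=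
  (Nat.fib n : ℝ) ^ 2 + β₁ * (Nat.fib (n + 1) : ℝ) ^ 2
    + β₂ * (Nat.fib (n + 2) : ℝ) ^ 2 + β₁ * β₂ * (Nat.fib (n + 3) : ℝ) ^ 2

/-! By Binet's formula `fib n / φ ^ n → 1 / √5`, so `nrm β₁ β₂ n / φ ^ (2 * n)` tends to
`(1 + β₁ φ² + β₂ φ⁴ + β₁ β₂ φ⁶) / 5`, which is `Efun β₁ β₂` once the powers of `φ` are reduced
with `φ² = φ + 1`. A sequence with a nonzero limit eventually has the sign of that limit, so
consecutive norms eventually have the same sign. -/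

open Filter Real
open scoped Topology goldenRatio

theorem tendsto_fib_div_goldenRatio_pow :
    Tendsto (fun n ↦ (Nat.fib n : ℝ) / φ ^ n) atTop (𝓝 (1 / √5)) := by
  have hratio : Tendsto (fun n ↦ (ψ / φ) ^ n) atTop (𝓝 0) := by
    refine tendsto_pow_atTop_nhds_zero_of_abs_lt_one ?_
    rw [abs_div, abs_of_pos goldenRatio_pos, div_lt_one goldenRatio_pos, abs_lt]
    constructor <;> linarith [neg_one_lt_goldenConj, goldenConj_neg, one_lt_goldenRatio]
  have hfun : (fun n ↦ (Nat.fib n : ℝ) / φ ^ n) = fun n ↦ (1 - (ψ / φ) ^ n) / √5 := by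
    ext n
    rw [coe_fib_eq, div_pow ψ φ n]
    field_simp
  rw [hfun, show (1 : ℝ) / √5 = (1 - 0) / √5 by ring]
  exact (hratio.const_sub 1).div_const _

theorem tendsto_fib_add_sq_div_goldenRatio_pow (k : ℕ) :
    Tendsto (fun n ↦ (Nat.fib (n + k) : ℝ) ^ 2 / φ ^ (2 * n)) atTop (𝓝 (φ ^ (2 * k) / 5)) := by
  have hshift := (tendsto_fib_div_goldenRatio_pow.comp (tendsto_add_atTop_nat k)).pow 2
  have hfun : (fun n ↦ (Nat.fib (n + k) : ℝ) ^ 2 / φ ^ (2 * n))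
      = fun n ↦ ((Nat.fib (n + k) : ℝ) / φ ^ (n + k)) ^ 2 * φ ^ (2 * k) := by
    ext n
    field_simp
    ring
  rw [hfun, show φ ^ (2 * k) / 5 = (1 / √5) ^ 2 * φ ^ (2 * k) by
    rw [div_pow 1 √5 2, sq_sqrt (by norm_num : (0 : ℝ) ≤ 5)]; ring]
  exact hshift.mul_const _

theorem Efun_eq_goldenRatio_pow (β₁ β₂ : ℝ) :
    Efun β₁ β₂ = (1 + β₁ * φ ^ 2 + β₂ * φ ^ 4 + β₁ * β₂ * φ ^ 6) / 5 := by
  have h2 := goldenRatio_sq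
  have h4 : φ ^ 4 = 3 * φ + 2 := by linear_combination (φ ^ 2 + φ + 2) * h2
  have h6 : φ ^ 6 = 8 * φ + 5 := by
    linear_combination (φ ^ 4 + φ ^ 3 + 2 * φ ^ 2 + 3 * φ + 5) * h2
  rw [Efun, show goldenα = φ from rfl, h2, h4, h6]
  ring

theorem tendsto_nrm_div_goldenRatio_pow (β₁ β₂ : ℝ) :
    Tendsto (fun n ↦ nrm β₁ β₂ n / φ ^ (2 * n)) atTop (𝓝 (Efun β₁ β₂)) := by
  have h := tendsto_fib_add_sq_div_goldenRatio_pow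
  have hsum := (((h 0).add ((h 1).const_mul β₁)).add ((h 2).const_mul β₂)).add
    ((h 3).const_mul (β₁ * β₂))
  convert hsum using 1
  · ext n
    simp only [nrm, add_zero]
    ring
  · rw [Efun_eq_goldenRatio_pow]
    congr 1
    ring

theorem eventually_mul_succ_pos_of_tendsto {u : ℕ → ℝ} {L : ℝ} (hu : Tendsto u atTop (𝓝 L))
    (hL : L ≠ 0) : ∀ᶠ n in atTop, 0 < u n * u (n + 1) :=
  (hu.mul (hu.comp (tendsto_add_atTop_nat 1))).eventually (lt_mem_nhds (mul_self_pos.2 hL))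

theorem det_fib_norms_pos (β₁ β₂ : ℝ) (hE : Efun β₁ β₂ ≠ 0) :
    ∃ n' : ℕ, ∀ n ≥ n', nrm β₁ β₂ n * nrm β₁ β₂ (n + 1) > 0 := by
  obtain ⟨N, hN⟩ := eventually_atTop.1 <|
    eventually_mul_succ_pos_of_tendsto (tendsto_nrm_div_goldenRatio_pow β₁ β₂) hE
  refine ⟨N, fun n hn ↦ ?_⟩
  have hφ : ∀ m, φ ^ (2 * m) ≠ 0 := fun m ↦ pow_ne_zero _ goldenRatio_ne_zero
  have hfactor : nrm β₁ β₂ n * nrm β₁ β₂ (n + 1) = nrm β₁ β₂ n / φ ^ (2 * n)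
      * (nrm β₁ β₂ (n + 1) / φ ^ (2 * (n + 1))) * (φ ^ (2 * n) * φ ^ (2 * (n + 1))) := by
    field_simp [hφ]
  rw [gt_iff_lt, hfactor]
  exact mul_pos (hN n hn) (by positivity)
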